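/- arXiv:2605.10468 — 2 statements merged into one kernel-verified Lean document; each statement's English description precedes it below -/
import Mathlib

section
/- Let $z \in \mathbb{R}^n$, $z \ne 0$, and $r_0 \in \mathbb{R}^m$. For $\rho \ge 0$, the minimum of $\frac12\|\Delta z - r_0\|_2^2$ over all matrices $\Delta \in \mathbb{R}^{m\times n}$ with $\|\Delta\|_{\max} \le \rho$ equals $\frac12\sum_{i=1}^m \big(|(r_0)_i| - \rho\|z\|_1\big)_+^2$. -/
open Filter Matrix

noncomputable def l2 {n : ℕ} (v : Fin n → ℝ) : ℝ := Real.sqrt (∑ i, v i ^ 2)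
noncomputable def l1 {n : ℕ} (v : Fin n → ℝ) : ℝ := ∑ i, |v i|
noncomputable def linf {n : ℕ} (v : Fin n → ℝ) : ℝ := ⨆ i, |v i|
noncomputable def maxNorm {m n : ℕ} (W : Matrix (Fin m) (Fin n) ℝ) : ℝ := ⨆ i, ⨆ j, |W i j|
noncomputable def spec {m n : ℕ} (W : Matrix (Fin m) (Fin n) ℝ) : ℝ :=
  sSup {c | ∃ v : Fin n → ℝ, l2 v = 1 ∧ c = l2 (W.mulVec v)}
noncomputable def l0 {n : ℕ} (v : Fin n → ℝ) : ℕ := (Finset.univ.filter fun j => v j ≠ 0).card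

lemma sign_mul_self' (x : ℝ) : Real.sign x * x = |x| := by
  rcases lt_trichotomy x 0 with h | h | h
  · rw [Real.sign_of_neg h, abs_of_neg h]; ring
  · simp [h]
  · rw [Real.sign_of_pos h, abs_of_pos h]; ring

lemma sign_mul_abs' (x : ℝ) : Real.sign x * |x| = x := by
  rcases lt_trichotomy x 0 with h | h | h
  · rw [Real.sign_of_neg h, abs_of_neg h]; ring
  · simp [h]
  · rw [Real.sign_of_pos h, abs_of_pos h]; ring

lemma abs_sign_le (x : ℝ) : |Real.sign x| ≤ 1 := by
  rcases lt_trichotomy x 0 with h | h | h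
  · rw [Real.sign_of_neg h]; norm_num
  · simp [h]
  · rw [Real.sign_of_pos h]; norm_num

lemma l2_sq {k : ℕ} (v : Fin k → ℝ) : (l2 v) ^ 2 = ∑ i, v i ^ 2 := by
  rw [l2, Real.sq_sqrt]
  exact Finset.sum_nonneg fun i _ => sq_nonneg _

theorem stmt10 {m n : ℕ} (z : Fin n → ℝ) (hz : z ≠ 0) (r0 : Fin m → ℝ)
    (ρ : ℝ) (hρ : 0 ≤ ρ) :
    IsLeast {c | ∃ Δ : Matrix (Fin m) (Fin n) ℝ, maxNorm Δ ≤ ρ ∧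
        c = (1 / 2) * (l2 (Δ.mulVec z - r0)) ^ 2}
      ((1 / 2) * ∑ i, (max (|r0 i| - ρ * l1 z) 0) ^ 2) := by
  set L := l1 z with hLdef
  have hL : 0 < L := by
    obtain ⟨j, hj⟩ : ∃ j, z j ≠ 0 := by
      by_contra h; push_neg at h; exact hz (funext h)
    apply Finset.sum_pos' (fun i _ => abs_nonneg _)
    exact ⟨j, Finset.mem_univ j, abs_pos.mpr hj⟩
  constructor
  · -- membership: construct the optimal Δ
    set c : Fin m → ℝ := fun i => Real.sign (r0 i) * (min |r0 i| (ρ * L) / L) with hc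
    refine ⟨fun i j => c i * Real.sign (z j), ?_, ?_⟩
    · -- maxNorm ≤ ρ
      apply Real.iSup_le _ hρ
      intro i
      apply Real.iSup_le _ hρ
      intro j
      have h1 : |c i| ≤ ρ := by
        rw [hc, abs_mul, abs_div, abs_of_pos hL]
        have h2 : |min |r0 i| (ρ * L)| ≤ ρ * L := by
          rw [abs_of_nonneg (le_min (abs_nonneg _) (by positivity))]
          exact min_le_right _ _
        calc |Real.sign (r0 i)| * (|min |r0 i| (ρ * L)| / L)
            ≤ 1 * ((ρ * L) / L) := by
              apply mul_le_mul (abs_sign_le _) (by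
                apply div_le_div_of_nonneg_right h2 hL.le) (by positivity) zero_le_one
          _ = ρ := by field_simp
      calc |c i * Real.sign (z j)| = |c i| * |Real.sign (z j)| := abs_mul _ _
        _ ≤ ρ * 1 := mul_le_mul h1 (abs_sign_le _) (abs_nonneg _) hρ
        _ = ρ := mul_one ρ
    · -- value equals target
      congr 1
      rw [l2_sq]
      apply Finset.sum_congr rfl
      intro i _
      have hmul : (Matrix.mulVec (fun i j => c i * Real.sign (z j)) z) i = c i * L := by
        simp only [Matrix.mulVec, dotProduct]
        rw [hLdef]
        simp only [l1, Finset.mul_sum]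
        apply Finset.sum_congr rfl
        intro j _
        rw [mul_assoc, sign_mul_self' (z j)]
      rw [Pi.sub_apply, hmul]
      rcases eq_or_ne (r0 i) 0 with h0 | h0
      · have hc0 : c i = 0 := by simp [hc, h0]
        rw [hc0, h0]
        have : max (|(0:ℝ)| - ρ * L) 0 = 0 :=
          max_eq_right (by simp; positivity)
        rw [this]
        norm_num
      · have hs : Real.sign (r0 i) * |r0 i| = r0 i := sign_mul_abs' _
        have : c i * L - r0 i = Real.sign (r0 i) * (min |r0 i| (ρ * L) - |r0 i|) := by
          rw [hc]
          field_simp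
          linarith [hs]
        rw [this, mul_pow]
        have hsgn : Real.sign (r0 i) ^ 2 = 1 := by
          rcases lt_trichotomy (r0 i) 0 with h | h | h
          · rw [Real.sign_of_neg h]; norm_num
          · exact absurd h h0
          · rw [Real.sign_of_pos h]; norm_num
        rw [hsgn, one_mul]
        have : min |r0 i| (ρ * L) - |r0 i| = -(max (|r0 i| - ρ * L) 0) := by
          rcases le_total |r0 i| (ρ * L) with h | h
          · rw [min_eq_left h, max_eq_right (by linarith)]; ring
          · rw [min_eq_right h, max_eq_left (by linarith)]; ring
        rw [this]; ring
  · -- lower bound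
    rintro x ⟨Δ, hΔ, rfl⟩
    have hb : ∀ i j, |Δ i j| ≤ ρ := by
      intro i j
      refine le_trans ?_ hΔ
      calc |Δ i j| ≤ ⨆ j, |Δ i j| := le_ciSup (f := fun j => |Δ i j|) (Set.Finite.bddAbove (Set.finite_range _)) j
        _ ≤ ⨆ i, ⨆ j, |Δ i j| :=
            le_ciSup (f := fun i => ⨆ j, |Δ i j|)
              (Set.Finite.bddAbove (Set.finite_range _)) i
    rw [l2_sq]
    apply mul_le_mul_of_nonneg_left _ (by norm_num : (0:ℝ) ≤ 1/2)
    apply Finset.sum_le_sum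
    intro i _
    set t := (Δ.mulVec z - r0) i with ht
    have hbd : |Δ.mulVec z i| ≤ ρ * L := by
      simp only [Matrix.mulVec, dotProduct]
      calc |∑ j, Δ i j * z j| ≤ ∑ j, |Δ i j * z j| := Finset.abs_sum_le_sum_abs _ _
        _ ≤ ∑ j, ρ * |z j| := by
            apply Finset.sum_le_sum
            intro j _
            rw [abs_mul]
            exact mul_le_mul_of_nonneg_right (hb i j) (abs_nonneg _)
        _ = ρ * L := by rw [← Finset.mul_sum, hLdef]; rfl
    have h1 : max (|r0 i| - ρ * L) 0 ≤ |t| := by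
      apply max_le _ (abs_nonneg _)
      have : |r0 i| ≤ |t| + |Δ.mulVec z i| := by
        have : r0 i = Δ.mulVec z i - t := by rw [ht]; simp
        rw [this]
        calc |Δ.mulVec z i - t| ≤ |Δ.mulVec z i| + |t| := abs_sub _ _
          _ = |t| + |Δ.mulVec z i| := add_comm _ _
      linarith
    calc (max (|r0 i| - ρ * L) 0) ^ 2 ≤ |t| ^ 2 := by
          apply pow_le_pow_left₀ (le_max_right _ _) h1
      _ = t ^ 2 := sq_abs t
end

section
/- Let $z \in \mathbb{R}^n$, $z \ne 0$, and $r_0 \in \mathbb{R}^m$. For $\rho \ge 0$, the minimum of $\frac12\|\Delta z - r_0\|_2^2$ over all matrices $\Delta$ with spectral norm $\|\Delta\|_2 \le \rho$ equals $\frac12\big(\|r_0\|_2 - \rho\|z\|_2\big)_+^2$. -/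
/-!
As `Δ` ranges over the matrices of spectral norm at most `ρ`, the vector `Δ z` ranges exactly
over the Euclidean ball of radius `ρ‖z‖`: the bound `‖Δ z‖ ≤ ρ‖z‖` is the definition of the
spectral norm, and any `u` in that ball is `Δ z` for the rank-one matrix `Δ = u zᵀ / ‖z‖²`, whose
spectral norm is at most `‖u‖ / ‖z‖` by Cauchy–Schwarz (for `z = 0` the ball is `{0}` and `Δ = 0`). So the minimum is half the squared distance from `r₀` to that ball,
which is `(‖r₀‖ - ρ‖z‖)₊`, attained at the radial projection of `r₀`.
-/

open Filter Matrix

open WithLp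

lemma l2_eq_norm {n : ℕ} (v : Fin n → ℝ) : l2 v = ‖toLp 2 v‖ := by
  simp [l2, EuclideanSpace.norm_eq]

lemma l2_smul {n : ℕ} (a : ℝ) (v : Fin n → ℝ) : l2 (a • v) = |a| * l2 v := by
  simp [l2_eq_norm, norm_smul]

lemma l2_nonneg {n : ℕ} (v : Fin n → ℝ) : 0 ≤ l2 v := Real.sqrt_nonneg _

lemma l2_pos {n : ℕ} {v : Fin n → ℝ} (hv : v ≠ 0) : 0 < l2 v := by
  simpa [l2_eq_norm] using hv

lemma dotProduct_self_eq_l2_sq {n : ℕ} (v : Fin n → ℝ) : v ⬝ᵥ v = l2 v ^ 2 := by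
  rw [l2_eq_norm, ← real_inner_self_eq_norm_sq, EuclideanSpace.inner_toLp_toLp, star_trivial]

lemma abs_dotProduct_le_l2_mul {n : ℕ} (v w : Fin n → ℝ) : |v ⬝ᵥ w| ≤ l2 v * l2 w := by
  simpa [l2_eq_norm, EuclideanSpace.inner_toLp_toLp, dotProduct_comm] using
    abs_real_inner_le_norm (toLp 2 v) (toLp 2 w)

open scoped Matrix.Norms.L2Operator in
lemma l2_mulVec_le_spec_mul {m n : ℕ} (W : Matrix (Fin m) (Fin n) ℝ) (v : Fin n → ℝ) :
    l2 (W *ᵥ v) ≤ spec W * l2 v := by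
  rcases eq_or_ne v 0 with rfl | hv
  · simp [l2]
  have hbdd : BddAbove {c | ∃ v : Fin n → ℝ, l2 v = 1 ∧ c = l2 (W *ᵥ v)} := by
    refine ⟨‖W‖, ?_⟩
    rintro _ ⟨w, hw, rfl⟩
    rw [l2_eq_norm] at hw
    simpa [l2_eq_norm, hw] using l2_opNorm_mulVec W (toLp 2 w)
  have hv' := l2_pos hv
  have hunit : l2 ((l2 v)⁻¹ • v) = 1 := by
    rw [l2_smul, abs_of_pos (inv_pos.2 hv'), inv_mul_cancel₀ hv'.ne']
  have := le_csSup hbdd ⟨_, hunit, rfl⟩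
  rw [mulVec_smul, l2_smul, abs_of_pos (inv_pos.2 hv'), inv_mul_le_iff₀ hv'] at this
  rwa [spec, mul_comm]

lemma spec_le_of_l2_mulVec_le {m n : ℕ} {W : Matrix (Fin m) (Fin n) ℝ} {ρ : ℝ} (hρ : 0 ≤ ρ)
    (h : ∀ v, l2 (W *ᵥ v) ≤ ρ * l2 v) : spec W ≤ ρ :=
  Real.sSup_le (by rintro _ ⟨v, hv, rfl⟩; simpa [hv] using h v) hρ

lemma spec_vecMulVec_le {m n : ℕ} (u : Fin m → ℝ) (z : Fin n → ℝ) :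
    spec (vecMulVec u z) ≤ l2 u * l2 z := by
  refine spec_le_of_l2_mulVec_le (mul_nonneg (l2_nonneg u) (l2_nonneg z)) fun v => ?_
  rw [vecMulVec_mulVec, op_smul_eq_smul, l2_smul]
  calc |z ⬝ᵥ v| * l2 u ≤ l2 z * l2 v * l2 u :=
        mul_le_mul_of_nonneg_right (abs_dotProduct_le_l2_mul z v) (l2_nonneg u)
    _ = l2 u * l2 z * l2 v := by ring

lemma exists_spec_le_mulVec_eq {m n : ℕ} {ρ : ℝ} (hρ : 0 ≤ ρ) {z : Fin n → ℝ} {u : Fin m → ℝ}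
    (hu : l2 u ≤ ρ * l2 z) : ∃ Δ : Matrix (Fin m) (Fin n) ℝ, spec Δ ≤ ρ ∧ Δ *ᵥ z = u := by
  rcases eq_or_ne z 0 with rfl | hz
  · have hu0 : u = 0 := by simpa [l2_eq_norm] using hu
    exact ⟨0, spec_le_of_l2_mulVec_le hρ fun v => by
      simpa [l2_eq_norm] using mul_nonneg hρ (norm_nonneg (toLp 2 v)), by simp [hu0]⟩
  have hz' := l2_pos hz
  refine ⟨vecMulVec ((l2 z ^ 2)⁻¹ • u) z, (spec_vecMulVec_le _ _).trans ?_, ?_⟩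
  · rw [l2_smul, abs_of_pos (by positivity)]
    calc (l2 z ^ 2)⁻¹ * l2 u * l2 z = l2 u / l2 z := by field_simp
      _ ≤ ρ := by rwa [div_le_iff₀ hz']
  · rw [vecMulVec_mulVec, op_smul_eq_smul, dotProduct_self_eq_l2_sq, smul_smul,
      mul_inv_cancel₀ (by positivity), one_smul]

lemma isLeast_norm_sub_closedBall {E : Type*} [NormedAddCommGroup E] [NormedSpace ℝ E] (r : E)
    {R : ℝ} (hR : 0 ≤ R) :
    IsLeast ((‖· - r‖) '' Metric.closedBall 0 R) (max (‖r‖ - R) 0) := by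
  refine ⟨?_, ?_⟩
  · rcases le_or_gt ‖r‖ R with hr | hr
    · exact ⟨r, by simpa using hr, by simp [hr]⟩
    · have hr' : 0 < ‖r‖ := hR.trans_lt hr
      refine ⟨(R / ‖r‖) • r, ?_, ?_⟩
      · rw [mem_closedBall_zero_iff, norm_smul_of_nonneg (by positivity),
          div_mul_cancel₀ _ hr'.ne']
      · have : (R / ‖r‖) • r - r = (R / ‖r‖ - 1) • r := by rw [sub_smul, one_smul]
        simp only [this, norm_smul]
        rw [Real.norm_of_nonpos (by rw [sub_nonpos, div_le_one hr']; exact hr.le),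
          max_eq_left (by linarith)]
        field_simp
        ring
  · rintro _ ⟨u, hu, rfl⟩
    rw [mem_closedBall_zero_iff] at hu
    exact max_le (by linarith [norm_sub_norm_le r u, norm_sub_rev r u]) (norm_nonneg _)

theorem stmt11_general {m n : ℕ} (z : Fin n → ℝ) (r0 : Fin m → ℝ)
    (ρ : ℝ) (hρ : 0 ≤ ρ) :
    IsLeast {c | ∃ Δ : Matrix (Fin m) (Fin n) ℝ, spec Δ ≤ ρ ∧
        c = (1 / 2) * (l2 (Δ.mulVec z - r0)) ^ 2}
      ((1 / 2) * (max (l2 r0 - ρ * l2 z) 0) ^ 2) := by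
  obtain ⟨⟨u, hu, hdist⟩, hlb⟩ :=
    isLeast_norm_sub_closedBall (toLp 2 r0) (mul_nonneg hρ (l2_nonneg z))
  dsimp only at hdist
  rw [← l2_eq_norm r0] at hdist hlb
  refine ⟨?_, ?_⟩
  · obtain ⟨Δ, hΔ, hΔz⟩ := exists_spec_le_mulVec_eq hρ (z := z) (u := ofLp u)
      (by rwa [l2_eq_norm (ofLp u), toLp_ofLp, ← mem_closedBall_zero_iff])
    refine ⟨Δ, hΔ, ?_⟩
    rw [hΔz, l2_eq_norm (ofLp u - r0), toLp_sub, toLp_ofLp, hdist]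
  · rintro _ ⟨Δ, hΔ, rfl⟩
    have hball : toLp 2 (Δ *ᵥ z) ∈ Metric.closedBall 0 (ρ * l2 z) := by
      rw [mem_closedBall_zero_iff, ← l2_eq_norm]
      exact (l2_mulVec_le_spec_mul Δ z).trans (by gcongr; exact l2_nonneg z)
    have := hlb ⟨_, hball, rfl⟩
    dsimp only at this
    rw [← toLp_sub, ← l2_eq_norm] at this
    gcongr

theorem stmt11 {m n : ℕ} (z : Fin n → ℝ) (hz : z ≠ 0) (r0 : Fin m → ℝ)
    (ρ : ℝ) (hρ : 0 ≤ ρ) :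
    IsLeast {c | ∃ Δ : Matrix (Fin m) (Fin n) ℝ, spec Δ ≤ ρ ∧
        c = (1 / 2) * (l2 (Δ.mulVec z - r0)) ^ 2}
      ((1 / 2) * (max (l2 r0 - ρ * l2 z) 0) ^ 2) :=
  stmt11_general z r0 ρ hρ
end
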